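/- arXiv:1504.01184 — 3 statements merged into one kernel-verified Lean document; each statement's English description precedes it below -/
import Mathlib

section
/- The condition defining a set K ⊂ ℝ^{1+n} that 'expands with speed less than one', namely K ⊆ {(t,x) : |x| ≤ c|t| + R} for some 0 < c < 1 and R > 0, is invariant under Lorentz boosts: if Λ is a linear map of ℝ^{1+n} preserving the Minkowski quadratic form -t² + |x|², then Λ(K) also satisfies such an inclusion (with possibly different constants 0 < c' < 1 and R' > 0). -/
/-!
For a set `K`, expanding with speed less than one is equivalent to a coercivity bound
`Q z + δ ‖z‖² ≤ C` on `K` for some `δ > 0`, where `Q` is the Minkowski form: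
the forward direction is convexity of the square, `(c a + R)² ≤ c a² + R² / (1 - c)`, and the
backward one reads `(1 + δ) |x|² ≤ t² + C` off the bound. The coercivity bound passes to `Λ(K)`
because `Q ∘ Λ = Q` and `‖Λ z‖ ≤ ‖Λ‖ ‖z‖`, at the price of shrinking `δ`.
-/

/-- The Minkowski quadratic form `Q(t,x) = -t² + |x|²` on `ℝ × ℝⁿ`. -/
noncomputable def minkQ {n : ℕ} (v : ℝ × EuclideanSpace ℝ (Fin n)) : ℝ :=
  -(v.1 ^ 2) + ‖v.2‖ ^ 2

def speedRegion (n : ℕ) (c R : ℝ) : Set (ℝ × EuclideanSpace ℝ (Fin n)) :=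
  {z | ‖z.2‖ ≤ c * |z.1| + R}

def addSqNormSublevel {E : Type*} [Norm E] (q : E → ℝ) (δ C : ℝ) : Set E :=
  {z | q z + δ * ‖z‖ ^ 2 ≤ C}

theorem sq_le_mul_sq_add_of_le_mul_add {a c x R : ℝ} (hc0 : 0 ≤ c) (hc1 : c < 1) (hx : 0 ≤ x)
    (h : x ≤ c * a + R) : x ^ 2 ≤ c * a ^ 2 + R ^ 2 / (1 - c) := by
  have hc : 0 < 1 - c := sub_pos.2 hc1
  have hgap : c * a ^ 2 + R ^ 2 / (1 - c) - (c * a + R) ^ 2 =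
      c * ((1 - c) * a - R) ^ 2 / (1 - c) := by
    field_simp
    ring
  calc x ^ 2 ≤ (c * a + R) ^ 2 := pow_le_pow_left₀ hx h 2
    _ ≤ c * a ^ 2 + R ^ 2 / (1 - c) := by
      have : 0 ≤ c * ((1 - c) * a - R) ^ 2 / (1 - c) := by positivity
      linarith

theorem le_sqrt_mul_abs_add_sqrt_of_sq_le {a x μ C : ℝ} (hμ : 0 ≤ μ) (hC : 0 ≤ C)
    (h : x ^ 2 ≤ μ * a ^ 2 + C) : x ≤ √μ * |a| + √C := by
  have hsq : x ^ 2 ≤ (√μ * |a| + √C) ^ 2 := by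
    have := mul_nonneg (mul_nonneg (Real.sqrt_nonneg μ) (abs_nonneg a)) (Real.sqrt_nonneg C)
    nlinarith [Real.sq_sqrt hμ, Real.sq_sqrt hC, sq_abs a]
  exact (abs_le_of_sq_le_sq' hsq (by positivity)).2

theorem Prod.norm_sq_le_norm_fst_sq_add_norm_snd_sq {E F : Type*} [SeminormedAddCommGroup E]
    [SeminormedAddCommGroup F] (z : E × F) : ‖z‖ ^ 2 ≤ ‖z.1‖ ^ 2 + ‖z.2‖ ^ 2 := by
  rw [Prod.norm_def]
  rcases max_choice ‖z.1‖ ‖z.2‖ with h | h <;> rw [h]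
  · exact le_add_of_nonneg_right (sq_nonneg _)
  · exact le_add_of_nonneg_left (sq_nonneg _)

theorem image_subset_addSqNormSublevel {E F : Type*} [SeminormedAddCommGroup E]
    [NormedSpace ℝ E] [SeminormedAddCommGroup F] [NormedSpace ℝ F] {q : E → ℝ} {q' : F → ℝ}
    (Λ : E →L[ℝ] F) (hΛ : ∀ z, q' (Λ z) = q z) {K : Set E} {δ C : ℝ} (hδ : 0 < δ)
    (hK : K ⊆ addSqNormSublevel q δ C) :
    ∃ δ' > 0, Λ '' K ⊆ addSqNormSublevel q' δ' C := by
  refine ⟨δ / (1 + ‖Λ‖ ^ 2), by positivity, ?_⟩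
  rintro _ ⟨z, hz, rfl⟩
  have hΛz : ‖Λ z‖ ^ 2 ≤ (1 + ‖Λ‖ ^ 2) * ‖z‖ ^ 2 := by
    calc ‖Λ z‖ ^ 2 ≤ (‖Λ‖ * ‖z‖) ^ 2 := pow_le_pow_left₀ (norm_nonneg _) (Λ.le_opNorm z) 2
      _ ≤ (1 + ‖Λ‖ ^ 2) * ‖z‖ ^ 2 := by nlinarith [sq_nonneg ‖z‖]
  have hshrink : δ / (1 + ‖Λ‖ ^ 2) * ‖Λ z‖ ^ 2 ≤ δ * ‖z‖ ^ 2 := by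
    rw [div_mul_eq_mul_div, div_le_iff₀ (by positivity)]
    nlinarith
  have hz' : q z + δ * ‖z‖ ^ 2 ≤ C := hK hz
  show q' (Λ z) + _ ≤ C
  linarith [hΛ z]

theorem exists_speedRegion_subset_addSqNormSublevel {n : ℕ} {c : ℝ} (hc0 : 0 ≤ c) (hc1 : c < 1)
    (R : ℝ) : ∃ δ > 0, ∃ C, speedRegion n c R ⊆ addSqNormSublevel minkQ δ C := by
  refine ⟨(1 - c) / 2, by linarith, (3 - c) / 2 * (R ^ 2 / (1 - c)), fun z hz => ?_⟩
  have hx := sq_le_mul_sq_add_of_le_mul_add hc0 hc1 (norm_nonneg _) hz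
  have hz := Prod.norm_sq_le_norm_fst_sq_add_norm_snd_sq z
  rw [sq_abs] at hx
  rw [Real.norm_eq_abs, sq_abs] at hz
  simp only [addSqNormSublevel, minkQ, Set.mem_ofPred_eq]
  nlinarith [sq_nonneg (1 - c), sq_nonneg z.1]

theorem exists_addSqNormSublevel_subset_speedRegion {n : ℕ} {δ : ℝ} (hδ : 0 < δ) (C : ℝ) :
    ∃ c' R', 0 < c' ∧ c' < 1 ∧ 0 < R' ∧ addSqNormSublevel minkQ δ C ⊆ speedRegion n c' R' := by
  set μ := (1 + δ)⁻¹ with hμ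
  have hμ0 : 0 < μ := by positivity
  have hμ1 : μ < 1 := inv_lt_one_of_one_lt₀ (by linarith)
  refine ⟨√μ, √|C| + 1, Real.sqrt_pos.2 hμ0, by simpa using Real.sqrt_lt_sqrt hμ0.le hμ1,
    by positivity, fun z hz => ?_⟩
  have hQ : minkQ z + δ * ‖z‖ ^ 2 ≤ C := hz
  have hsnd : ‖z.2‖ ^ 2 ≤ ‖z‖ ^ 2 := pow_le_pow_left₀ (norm_nonneg _) (norm_snd_le z) 2
  have hx : ‖z.2‖ ^ 2 ≤ μ * z.1 ^ 2 + |C| := by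
    have h1 : (1 + δ) * ‖z.2‖ ^ 2 ≤ z.1 ^ 2 + C := by
      unfold minkQ at hQ
      nlinarith
    have h2 : ‖z.2‖ ^ 2 ≤ μ * (z.1 ^ 2 + C) := by
      rwa [hμ, inv_mul_eq_div, le_div_iff₀ (by positivity), mul_comm]
    have h3 : μ * C ≤ |C| := by nlinarith [le_abs_self C, abs_nonneg C]
    linarith
  have := le_sqrt_mul_abs_add_sqrt_of_sq_le hμ0.le (abs_nonneg C) hx
  show ‖z.2‖ ≤ √μ * |z.1| + (√|C| + 1)
  linarith

theorem stmt2_general {n : ℕ}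
    (Λ : (ℝ × EuclideanSpace ℝ (Fin n)) ≃ₗ[ℝ] (ℝ × EuclideanSpace ℝ (Fin n)))
    (hΛ : ∀ z, minkQ (Λ z) = minkQ z)
    (K : Set (ℝ × EuclideanSpace ℝ (Fin n))) (c R : ℝ)
    (hc0 : 0 < c) (hc1 : c < 1)
    (hK : K ⊆ {z : ℝ × EuclideanSpace ℝ (Fin n) | ‖z.2‖ ≤ c * |z.1| + R}) :
    ∃ c' R' : ℝ, 0 < c' ∧ c' < 1 ∧ 0 < R' ∧
      (Λ '' K) ⊆ {z : ℝ × EuclideanSpace ℝ (Fin n) | ‖z.2‖ ≤ c' * |z.1| + R'} := by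
  obtain ⟨δ, hδ, C, hcone⟩ := exists_speedRegion_subset_addSqNormSublevel (n := n) hc0.le hc1 R
  obtain ⟨δ', hδ', hΛK⟩ :=
    image_subset_addSqNormSublevel Λ.toContinuousLinearEquiv.toContinuousLinearMap hΛ hδ
      (hK.trans hcone)
  obtain ⟨c', R', hc'0, hc'1, hR', hback⟩ := exists_addSqNormSublevel_subset_speedRegion hδ' C
  exact ⟨c', R', hc'0, hc'1, hR', hΛK.trans hback⟩

/-- "Expanding with speed less than one" is Lorentz invariant: if `Λ` is a linear bijection
preserving the Minkowski quadratic form and `K ⊆ {|x| ≤ c|t| + R}` with `0 < c < 1`, `R > 0`,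
then `Λ(K)` satisfies such an inclusion with possibly different constants. -/
theorem stmt2 {n : ℕ}
    (Λ : (ℝ × EuclideanSpace ℝ (Fin n)) ≃ₗ[ℝ] (ℝ × EuclideanSpace ℝ (Fin n)))
    (hΛ : ∀ z, minkQ (Λ z) = minkQ z)
    (K : Set (ℝ × EuclideanSpace ℝ (Fin n))) (c R : ℝ)
    (hc0 : 0 < c) (hc1 : c < 1) (hR : 0 < R)
    (hK : K ⊆ {z : ℝ × EuclideanSpace ℝ (Fin n) | ‖z.2‖ ≤ c * |z.1| + R}) :
    ∃ c' R' : ℝ, 0 < c' ∧ c' < 1 ∧ 0 < R' ∧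
      (Λ '' K) ⊆ {z : ℝ × EuclideanSpace ℝ (Fin n) | ‖z.2‖ ≤ c' * |z.1| + R'} :=
  stmt2_general Λ hΛ K c R hc0 hc1 hK
end

section
/- Let f ∈ 𝒮(ℝ^{1+n}) and suppose Lf(x,θ) = 0 for all x ∈ ℝⁿ and all θ ∈ S^{n-1}. Then the Fourier transform f̂(τ,ξ) vanishes on the closed spacelike-lightlike cone {(τ,ξ) : |τ| ≤ |ξ|}. -/
/-! Given `|τ| ≤ |ξ|`, connectedness of the unit sphere (`n ≥ 2`) yields a unit `θ` with
`θ·ξ = -τ`. The shear `(s, x) ↦ (s, x + sθ)` preserves Lebesgue measure and turns the phase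
`sτ + (x + sθ)·ξ` into `x·ξ`, independent of `s`; hence `f̂(τ, ξ) = ∫ e^{-i x·ξ} Lf(x, θ) dx = 0`. -/

open scoped RealInnerProductSpace
open MeasureTheory

theorem exists_norm_eq_one_inner_eq {E : Type*} [NormedAddCommGroup E] [InnerProductSpace ℝ E]
    (hE : 1 < Module.rank ℝ E) {ξ : E} {t : ℝ} (ht : |t| ≤ ‖ξ‖) :
    ∃ θ : E, ‖θ‖ = 1 ∧ ⟪θ, ξ⟫ = t := by
  rcases eq_or_ne ξ 0 with rfl | hξ
  · have : Nontrivial E := rank_pos_iff_nontrivial.mp (zero_lt_one.trans hE)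
    obtain ⟨θ, hθ⟩ := exists_norm_eq E zero_le_one
    exact ⟨θ, hθ, by simpa using (abs_nonpos_iff.mp (by simpa using ht)).symm⟩
  set u := ‖ξ‖⁻¹ • ξ
  have hu : ‖u‖ = 1 := norm_smul_inv_norm hξ
  have huξ : ⟪u, ξ⟫ = ‖ξ‖ := by
    rw [real_inner_smul_left, real_inner_self_eq_norm_sq]
    field_simp
  obtain ⟨θ, hθ, hθξ⟩ := (isConnected_sphere hE 0 zero_le_one).isPreconnected.intermediate_value
    (a := -u) (b := u) (by simpa using hu) (by simpa using hu)
    (continuous_id.inner continuous_const).continuousOn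
    (show t ∈ Set.Icc ⟪-u, ξ⟫ ⟪u, ξ⟫ by rw [inner_neg_left, huξ]; exact abs_le.mp ht)
  exact ⟨θ, by simpa using hθ, hθξ⟩

section Shear

variable {E : Type*} [NormedAddCommGroup E] [NormedSpace ℝ E] [MeasurableSpace E] [BorelSpace E]
  [SecondCountableTopology E]

def MeasurableEquiv.shearSMul (θ : E) : ℝ × E ≃ᵐ ℝ × E where
  toFun p := (p.1, p.2 + p.1 • θ)
  invFun p := (p.1, p.2 - p.1 • θ)
  left_inv p := by simp
  right_inv p := by simp
  measurable_toFun := measurable_fst.prodMk (measurable_snd.add (measurable_fst.smul_const θ))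
  measurable_invFun := measurable_fst.prodMk (measurable_snd.sub (measurable_fst.smul_const θ))

theorem MeasureTheory.measurePreserving_shearSMul {ν : Measure ℝ} {μ : Measure E} [SFinite ν]
    [SFinite μ] [μ.IsAddRightInvariant] (θ : E) :
    MeasurePreserving (MeasurableEquiv.shearSMul θ) (ν.prod μ) (ν.prod μ) :=
  (MeasurePreserving.id ν).skew_product (g := fun s x => x + s • θ)
    (measurable_snd.add (measurable_fst.smul_const θ))
    (.of_forall fun s => (measurePreserving_add_right μ (s • θ)).map_eq)

theorem MeasureTheory.integral_prod_eq_integral_integral_shear {F : Type*} [NormedAddCommGroup F]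
    [NormedSpace ℝ F] {ν : Measure ℝ} {μ : Measure E} [SFinite ν] [SFinite μ]
    [μ.IsAddRightInvariant] (θ : E) {g : ℝ × E → F} (hg : Integrable g (ν.prod μ)) :
    ∫ z, g z ∂(ν.prod μ) = ∫ x, ∫ s, g (s, x + s • θ) ∂ν ∂μ := by
  have hshear := measurePreserving_shearSMul (ν := ν) (μ := μ) θ
  rw [← hshear.integral_comp' g]
  exact integral_prod_symm _ (hshear.integrable_comp_of_integrable hg)

end Shear

theorem integral_exp_mul_eq_zero_of_integral_line_eq_zero {E : Type*} [NormedAddCommGroup E]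
    [InnerProductSpace ℝ E] [MeasurableSpace E] [BorelSpace E] [SecondCountableTopology E]
    {ν : Measure ℝ} {μ : Measure E} [SFinite ν] [SFinite μ] [μ.IsAddRightInvariant]
    {f : ℝ × E → ℂ} (hf : Integrable f (ν.prod μ)) {τ : ℝ} {θ ξ : E} (hθξ : ⟪θ, ξ⟫ = -τ)
    (hL : ∀ x, ∫ s, f (s, x + s • θ) ∂ν = 0) :
    ∫ z, Complex.exp (-Complex.I * ((z.1 * τ + ⟪z.2, ξ⟫ : ℝ) : ℂ)) * f z ∂(ν.prod μ) = 0 := by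
  have hint : Integrable (fun z : ℝ × E =>
      Complex.exp (-Complex.I * ((z.1 * τ + ⟪z.2, ξ⟫ : ℝ) : ℂ)) * f z) (ν.prod μ) :=
    hf.bdd_mul (c := 1) (by fun_prop) (.of_forall fun z => by rw [Complex.norm_exp]; simp)
  rw [integral_prod_eq_integral_integral_shear θ hint]
  refine integral_eq_zero_of_ae (.of_forall fun x => ?_)
  have hphase : ∀ s : ℝ, s * τ + ⟪x + s • θ, ξ⟫ = ⟪x, ξ⟫ := fun s => by
    rw [inner_add_left, real_inner_smul_left, hθξ]; ring
  simp only [hphase, integral_const_mul, hL x, mul_zero, Pi.zero_apply]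

/-- If the light ray transform `Lf(x,θ) = ∫ f(s, x+sθ) ds` of a Schwartz function `f` on
`ℝ^{1+n}` (n ≥ 2) vanishes for all `x ∈ ℝⁿ` and all unit `θ`, then the Fourier transform
`f̂(τ,ξ)` vanishes on the closed spacelike-lightlike cone `{|τ| ≤ |ξ|}`. -/
theorem stmt4 {n : ℕ} (hn : 2 ≤ n) (f : SchwartzMap (ℝ × EuclideanSpace ℝ (Fin n)) ℂ)
    (hL : ∀ (x θ : EuclideanSpace ℝ (Fin n)), ‖θ‖ = 1 →
      (∫ s : ℝ, f (s, x + s • θ)) = 0) :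
    ∀ (τ : ℝ) (ξ : EuclideanSpace ℝ (Fin n)), |τ| ≤ ‖ξ‖ →
      (∫ z : ℝ × EuclideanSpace ℝ (Fin n),
        Complex.exp (-Complex.I * ((z.1 * τ + ⟪z.2, ξ⟫ : ℝ) : ℂ)) * f z) = 0 := by
  intro τ ξ hτξ
  have hrank : 1 < Module.rank ℝ (EuclideanSpace ℝ (Fin n)) := by
    rw [← Module.finrank_eq_rank, finrank_euclideanSpace_fin]
    exact_mod_cast hn
  obtain ⟨θ, hθ, hθξ⟩ := exists_norm_eq_one_inner_eq hrank (t := -τ) (by rwa [abs_neg])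
  rw [Measure.volume_eq_prod]
  exact integral_exp_mul_eq_zero_of_integral_line_eq_zero (f.integrable (μ := volume.prod volume))
    hθξ fun x => hL x θ hθ
end

section
/- Let θ(q) = (cos q)e_n + (sin q)e_{n-1} and let ν(q,ξ) = ζ(q,ξ)/|ζ(q,ξ)| with ζ(q,ξ) = (-θ(q)·ξ, ξ). Then the map ℝ × S^{n-1} ∋ (q,ξ) ↦ ν(q,ξ) ∈ Sⁿ is a local analytic diffeomorphism near (q,ξ) = (0, e^{n-1}) onto a neighborhood of e^{n-1} in Sⁿ. -/
open scoped RealInnerProductSpace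

/-- `θ(q) = (cos q) e_n + (sin q) e_{n-1} ∈ S^{n-1} ⊂ ℝⁿ`. -/
noncomputable def thetaQ (n : ℕ) (hn : 2 ≤ n) (q : ℝ) : EuclideanSpace ℝ (Fin n) :=
  Real.cos q • EuclideanSpace.single ⟨n - 1, by omega⟩ (1 : ℝ) +
    Real.sin q • EuclideanSpace.single ⟨n - 2, by omega⟩ (1 : ℝ)

/-- `ζ(q,ξ) = (-θ(q)·ξ, ξ) ∈ ℝ^{1+n}`. -/
noncomputable def zetaMap (n : ℕ) (hn : 2 ≤ n) :
    ℝ × EuclideanSpace ℝ (Fin n) → ℝ × EuclideanSpace ℝ (Fin n) :=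
  fun p => (-⟪thetaQ n hn p.1, p.2⟫, p.2)

/-- The Euclidean norm on `ℝ^{1+n} = ℝ × ℝⁿ`. -/
noncomputable def enorm1n {n : ℕ} (w : ℝ × EuclideanSpace ℝ (Fin n)) : ℝ :=
  Real.sqrt (w.1 ^ 2 + ‖w.2‖ ^ 2)

/-- `ν(q,ξ) = ζ(q,ξ)/|ζ(q,ξ)|`, the unit normal to the plane `{(x - tθ(q))·ξ = p}`. -/
noncomputable def nuMap (n : ℕ) (hn : 2 ≤ n) :
    ℝ × EuclideanSpace ℝ (Fin n) → ℝ × EuclideanSpace ℝ (Fin n) :=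
  fun p => (enorm1n (zetaMap n hn p))⁻¹ • zetaMap n hn p

/-!
Since `ν` is homogeneous of degree `0` in `ξ`, its derivative is singular; we invert instead
`Φ(q, ξ) = ‖ξ‖ ν(q, ξ) = λ(q, ξ) ζ(q, ξ)` with `λ = ‖ξ‖ / |ζ|`. It agrees with `ν` on `‖ξ‖ = 1`
and satisfies `|Φ(q, ξ)| = ‖ξ‖`, so it maps `ℝ × S^{n-1}` exactly into `Sⁿ`. As `λ ≤ 1` with
equality at the base point `(0, e^{n-1})`, there `dλ = 0` and `dΦ = dζ`, which is the involution
`(s, w) ↦ (-(s + θ(0)·w), w)` because `θ'(0)·e^{n-1} = 1`. The analytic inverse function theorem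
for `Φ` then gives the local analytic inverse, and cutting down to the sphere gives the claim.
-/

open scoped ContDiff Topology
open Set

section LocalInverse

variable {𝕂 E F : Type*} [RCLike 𝕂] [NormedAddCommGroup E] [NormedSpace 𝕂 E] [CompleteSpace E]
  [NormedAddCommGroup F] [NormedSpace 𝕂 F]

theorem ContDiffAt.exists_analyticOn_localInverse {f : E → F} {f' : E ≃L[𝕂] F} {a : E}
    {s : Set E} (hf : ContDiffAt 𝕂 ω f a) (hf' : HasFDerivAt f (f' : E →L[𝕂] F) a)
    (hs : s ∈ 𝓝 a) :
    ∃ U : Set E, IsOpen U ∧ a ∈ U ∧ U ⊆ s ∧ InjOn f U ∧ IsOpen (f '' U) ∧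
      ∃ g : F → E, AnalyticOn 𝕂 g (f '' U) ∧ ∀ x ∈ U, g (f x) = x := by
  have hω : (ω : WithTop ℕ∞) ≠ 0 := by simp
  set h := hf.toOpenPartialHomeomorph f hf' hω
  have hg : AnalyticAt 𝕂 h.symm (f a) := (hf.to_localInverse hf' hω).analyticAt
  set t := h.target ∩ {y | AnalyticAt 𝕂 h.symm y}
  have ht : IsOpen t := h.open_target.inter (isOpen_analyticAt 𝕂 _)
  have hfa : f a ∈ t := ⟨hf.image_mem_toOpenPartialHomeomorph_target hf' hω, hg⟩
  set U := h.source ∩ f ⁻¹' t ∩ interior s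
  have hU : IsOpen U := (h.isOpen_inter_preimage ht).inter isOpen_interior
  have hUsource : U ⊆ h.source := fun x hx => hx.1.1
  refine ⟨U, hU,
    ⟨⟨hf.mem_toOpenPartialHomeomorph_source hf' hω, hfa⟩, mem_interior_iff_mem_nhds.2 hs⟩,
    fun x hx => interior_subset hx.2, h.injOn.mono hUsource,
    h.isOpen_image_of_subset_source hU hUsource, h.symm, ?_, fun x hx => h.left_inv hx.1.1⟩
  rintro _ ⟨x, hx, rfl⟩
  exact hx.1.2.2.analyticWithinAt

end LocalInverse

section ShearReflection

variable {𝕜 F : Type*} [NontriviallyNormedField 𝕜] [NormedAddCommGroup F] [NormedSpace 𝕜 F]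

noncomputable def shearReflection (ℓ : F →L[𝕜] 𝕜) : (𝕜 × F) →L[𝕜] 𝕜 × F :=
  (-(ContinuousLinearMap.fst 𝕜 𝕜 F + ℓ.comp (ContinuousLinearMap.snd 𝕜 𝕜 F))).prod
    (ContinuousLinearMap.snd 𝕜 𝕜 F)

@[simp]
theorem shearReflection_apply (ℓ : F →L[𝕜] 𝕜) (w : 𝕜 × F) :
    shearReflection ℓ w = (-(w.1 + ℓ w.2), w.2) :=
  rfl

theorem shearReflection_involutive (ℓ : F →L[𝕜] 𝕜) : Function.Involutive (shearReflection ℓ) :=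
  fun w => by simp

noncomputable def shearReflectionEquiv (ℓ : F →L[𝕜] 𝕜) : (𝕜 × F) ≃L[𝕜] 𝕜 × F :=
  .equivOfInverse (shearReflection ℓ) (shearReflection ℓ) (shearReflection_involutive ℓ)
    (shearReflection_involutive ℓ)

end ShearReflection

theorem hasFDerivAt_neg_inner_prod {F : Type*} [NormedAddCommGroup F] [InnerProductSpace ℝ F]
    {θ : ℝ → F} {θ' ξ : F} {q : ℝ} (hθ : HasDerivAt θ θ' q) (hθ' : ⟪θ', ξ⟫ = 1) :
    HasFDerivAt (fun p : ℝ × F => (-⟪θ p.1, p.2⟫, p.2)) (shearReflection (innerSL ℝ (θ q)))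
      (q, ξ) := by
  have hinner := ((hθ.hasFDerivAt.comp (q, ξ) hasFDerivAt_fst).inner ℝ hasFDerivAt_snd).neg
  refine (hinner.prodMk hasFDerivAt_snd).congr_fderiv ?_
  ext w <;> simp [hθ', add_comm]

section EuclideanNorm

variable {n : ℕ}

theorem enorm1n_smul (t : ℝ) (w : ℝ × EuclideanSpace ℝ (Fin n)) :
    enorm1n (t • w) = |t| * enorm1n w := by
  simp only [enorm1n, Prod.smul_fst, Prod.smul_snd, smul_eq_mul, norm_smul, Real.norm_eq_abs,
    mul_pow, sq_abs]
  rw [← mul_add, Real.sqrt_mul (sq_nonneg t), Real.sqrt_sq_eq_abs]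

theorem norm_snd_le_enorm1n (w : ℝ × EuclideanSpace ℝ (Fin n)) : ‖w.2‖ ≤ enorm1n w :=
  Real.le_sqrt_of_sq_le (le_add_of_nonneg_left (sq_nonneg _))

theorem contDiffAt_enorm1n {w : ℝ × EuclideanSpace ℝ (Fin n)} (hw : enorm1n w ≠ 0) :
    ContDiffAt ℝ ω enorm1n w :=
  ((contDiff_fst.pow 2).add (contDiff_snd.norm_sq ℝ)).contDiffAt.sqrt
    fun h => hw (by simp [enorm1n, h])

end EuclideanNorm

section NuMap

variable (n : ℕ) (hn : 2 ≤ n)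

noncomputable def basePoint : ℝ × EuclideanSpace ℝ (Fin n) :=
  (0, EuclideanSpace.single ⟨n - 2, by omega⟩ 1)

theorem hasDerivAt_thetaQ (q : ℝ) :
    HasDerivAt (thetaQ n hn)
      (-Real.sin q • EuclideanSpace.single ⟨n - 1, by omega⟩ (1 : ℝ) +
        Real.cos q • EuclideanSpace.single ⟨n - 2, by omega⟩ (1 : ℝ)) q :=
  ((Real.hasDerivAt_cos q).smul_const _).add ((Real.hasDerivAt_sin q).smul_const _)

theorem zetaMap_basePoint : zetaMap n hn (basePoint n hn) = basePoint n hn := by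
  have hne : (⟨n - 1, by omega⟩ : Fin n) ≠ ⟨n - 2, by omega⟩ := by simp; omega
  simp [zetaMap, basePoint, thetaQ, EuclideanSpace.inner_single_left, hne]

theorem hasFDerivAt_zetaMap_basePoint :
    HasFDerivAt (zetaMap n hn) (shearReflection (innerSL ℝ (thetaQ n hn 0))) (basePoint n hn) :=
  hasFDerivAt_neg_inner_prod (by simpa using hasDerivAt_thetaQ n hn 0) (by simp)

theorem contDiff_zetaMap : ContDiff ℝ ω (zetaMap n hn) :=
  (((Real.contDiff_cos.comp contDiff_fst).smul contDiff_const).add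
    ((Real.contDiff_sin.comp contDiff_fst).smul contDiff_const) |>.inner ℝ contDiff_snd).neg.prodMk
    contDiff_snd

variable {n hn}

theorem enorm1n_zetaMap_pos {p : ℝ × EuclideanSpace ℝ (Fin n)} (hp : p.2 ≠ 0) :
    0 < enorm1n (zetaMap n hn p) :=
  (norm_pos_iff.2 hp).trans_le (norm_snd_le_enorm1n (zetaMap n hn p))

theorem contDiffAt_enorm1n_zetaMap {p : ℝ × EuclideanSpace ℝ (Fin n)} (hp : p.2 ≠ 0) :
    ContDiffAt ℝ ω (fun p => enorm1n (zetaMap n hn p)) p :=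
  (contDiffAt_enorm1n (enorm1n_zetaMap_pos hp).ne').comp p (contDiff_zetaMap n hn).contDiffAt

theorem contDiffAt_nuMap {p : ℝ × EuclideanSpace ℝ (Fin n)} (hp : p.2 ≠ 0) :
    ContDiffAt ℝ ω (nuMap n hn) p :=
  ((contDiffAt_enorm1n_zetaMap hp).inv (enorm1n_zetaMap_pos hp).ne').smul
    (contDiff_zetaMap n hn).contDiffAt

end NuMap

section Extension

variable (n : ℕ) (hn : 2 ≤ n)

noncomputable def nuScale (p : ℝ × EuclideanSpace ℝ (Fin n)) : ℝ :=
  ‖p.2‖ * (enorm1n (zetaMap n hn p))⁻¹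

noncomputable def nuExt (p : ℝ × EuclideanSpace ℝ (Fin n)) : ℝ × EuclideanSpace ℝ (Fin n) :=
  nuScale n hn p • zetaMap n hn p

variable {n hn}

theorem nuExt_eq_nuMap {p : ℝ × EuclideanSpace ℝ (Fin n)} (hp : ‖p.2‖ = 1) :
    nuExt n hn p = nuMap n hn p := by
  simp [nuExt, nuScale, nuMap, hp]

theorem nuScale_nonneg (p : ℝ × EuclideanSpace ℝ (Fin n)) : 0 ≤ nuScale n hn p :=
  mul_nonneg (norm_nonneg _) (inv_nonneg.2 (Real.sqrt_nonneg _))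

theorem enorm1n_nuExt (p : ℝ × EuclideanSpace ℝ (Fin n)) : enorm1n (nuExt n hn p) = ‖p.2‖ := by
  have hle := norm_snd_le_enorm1n (zetaMap n hn p)
  rw [nuExt, enorm1n_smul, abs_of_nonneg (nuScale_nonneg p), nuScale]
  rcases ((norm_nonneg _).trans hle).eq_or_lt with hzero | hpos
  · have : ‖p.2‖ ≤ 0 := hzero ▸ hle
    rw [← hzero, norm_le_zero_iff.1 this]
    simp
  · field_simp

theorem nuScale_le_one (p : ℝ × EuclideanSpace ℝ (Fin n)) : nuScale n hn p ≤ 1 :=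
  mul_inv_le_one_of_le₀ (norm_snd_le_enorm1n (zetaMap n hn p)) (Real.sqrt_nonneg _)

theorem basePoint_snd_ne_zero : (basePoint n hn).2 ≠ 0 := by
  simp [basePoint]

theorem nuScale_basePoint : nuScale n hn (basePoint n hn) = 1 := by
  rw [nuScale, zetaMap_basePoint]
  simp [basePoint, enorm1n]

theorem nuExt_basePoint : nuExt n hn (basePoint n hn) = basePoint n hn := by
  simp [nuExt, nuScale_basePoint, zetaMap_basePoint]

theorem contDiffAt_nuScale {p : ℝ × EuclideanSpace ℝ (Fin n)} (hp : p.2 ≠ 0) :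
    ContDiffAt ℝ ω (nuScale n hn) p :=
  (contDiffAt_snd.norm ℝ hp).mul
    ((contDiffAt_enorm1n_zetaMap hp).inv (enorm1n_zetaMap_pos hp).ne')

theorem contDiffAt_nuExt {p : ℝ × EuclideanSpace ℝ (Fin n)} (hp : p.2 ≠ 0) :
    ContDiffAt ℝ ω (nuExt n hn) p :=
  (contDiffAt_nuScale hp).smul (contDiff_zetaMap n hn).contDiffAt

theorem hasFDerivAt_nuScale_basePoint :
    HasFDerivAt (nuScale n hn) (0 : (ℝ × EuclideanSpace ℝ (Fin n)) →L[ℝ] ℝ) (basePoint n hn) := by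
  have hd : DifferentiableAt ℝ (nuScale n hn) (basePoint n hn) :=
    (contDiffAt_nuScale basePoint_snd_ne_zero).differentiableAt (by simp)
  have hmax : IsLocalMax (nuScale n hn) (basePoint n hn) :=
    IsMaxOn.isLocalMax (fun p _ => nuScale_basePoint (hn := hn) ▸ nuScale_le_one p)
      Filter.univ_mem
  simpa only [hmax.fderiv_eq_zero] using hd.hasFDerivAt

theorem hasFDerivAt_nuExt_basePoint :
    HasFDerivAt (nuExt n hn) (shearReflection (innerSL ℝ (thetaQ n hn 0))) (basePoint n hn) := by
  refine (hasFDerivAt_nuScale_basePoint.smul (hasFDerivAt_zetaMap_basePoint n hn)).congr_fderiv ?_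
  simp [nuScale_basePoint]

end Extension

/-- The map `(q,ξ) ↦ ν(q,ξ)`, restricted to `ξ ∈ S^{n-1}`, is a local analytic
diffeomorphism near `(0, e^{n-1})` onto a neighborhood of `e^{n-1}` in `Sⁿ ⊂ ℝ^{1+n}`. -/
theorem stmt10 (n : ℕ) (hn : 2 ≤ n) :
    ∃ U : Set (ℝ × EuclideanSpace ℝ (Fin n)), IsOpen U ∧
      ((0 : ℝ), EuclideanSpace.single (⟨n - 2, by omega⟩ : Fin n) (1 : ℝ)) ∈ U ∧
      AnalyticOn ℝ (nuMap n hn) U ∧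
      Set.InjOn (nuMap n hn) {p ∈ U | ‖p.2‖ = 1} ∧
      ∃ V : Set (ℝ × EuclideanSpace ℝ (Fin n)), IsOpen V ∧
        ((0 : ℝ), EuclideanSpace.single (⟨n - 2, by omega⟩ : Fin n) (1 : ℝ)) ∈ V ∧
        nuMap n hn '' {p ∈ U | ‖p.2‖ = 1} = V ∩ {w | enorm1n w = 1} ∧
        ∃ Ψ : ℝ × EuclideanSpace ℝ (Fin n) → ℝ × EuclideanSpace ℝ (Fin n),
          AnalyticOn ℝ Ψ V ∧ ∀ p ∈ {p ∈ U | ‖p.2‖ = 1}, Ψ (nuMap n hn p) = p := by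
  obtain ⟨U, hU, hbU, hUs, hinj, hV, Ψ, hΨ, hΨleft⟩ :=
    (contDiffAt_nuExt (hn := hn) basePoint_snd_ne_zero).exists_analyticOn_localInverse
      (f' := shearReflectionEquiv (innerSL ℝ (thetaQ n hn 0))) hasFDerivAt_nuExt_basePoint
      ((isOpen_ne_fun continuous_snd continuous_const).mem_nhds basePoint_snd_ne_zero)
  have hsphere : {p ∈ U | ‖p.2‖ = 1} = U ∩ nuExt n hn ⁻¹' {w | enorm1n w = 1} := by
    ext p
    simp [enorm1n_nuExt]
  have heq : EqOn (nuExt n hn) (nuMap n hn) {p ∈ U | ‖p.2‖ = 1} :=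
    fun p hp => nuExt_eq_nuMap hp.2
  refine ⟨U, hU, hbU, fun p hp => (contDiffAt_nuMap (hUs hp)).analyticAt.analyticWithinAt,
    (hinj.mono (sep_subset _ _)).congr heq, nuExt n hn '' U, hV, ?_, ?_, Ψ, hΨ, fun p hp => ?_⟩
  · exact ⟨basePoint n hn, hbU, nuExt_basePoint⟩
  · rw [← heq.image_eq, hsphere, image_inter_preimage]
  · rw [← heq hp]
    exact hΨleft p hp.1
end
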